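/- Let B be a nonempty subset of (0,1) that is closed in ℝ and θ-invariant (B = θ(B)). Then none of the sets B, closure(B_e^c), closure(B_b) contains a binary rational (a number of the form k/2^n with k, n integers). -/
import Mathlib


open Set MeasureTheory Filter

open Classical in
/-- The doubling map `θ` on `[0,1)`: `θ(ξ) = 2ξ` for `ξ < 1/2`, `2ξ − 1` otherwise. -/
noncomputable def theta (ξ : ℝ) : ℝ := if ξ < 1/2 then 2*ξ else 2*ξ - 1

open Classical in
/-- `ξ* = ξ + 1/2` for `ξ ∈ [0,1/2]` and `ξ − 1/2` for `ξ ∈ (1/2,1]`. -/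
noncomputable def starR (ξ : ℝ) : ℝ := if ξ ≤ 1/2 then ξ + 1/2 else ξ - 1/2


/-- The exit set `B_e^c = {ξ/2 + j/2 : ξ ∈ B, j ∈ {0,1}} ∩ ([0,1] \ B)`. -/
def BeI (B : Set ℝ) : Set ℝ :=
  {y | ∃ ξ ∈ B, y = ξ/2 ∨ y = ξ/2 + 1/2} ∩ (Set.Icc (0:ℝ) 1 \ B)

/-- The barrier set `B_b = (B_e^c)*`. -/
noncomputable def BbI (B : Set ℝ) : Set ℝ := starR '' BeI B

lemma B_no_bin (B : Set ℝ) (hB : B ⊆ Set.Ioo 0 1) (hinv : B = theta '' B) :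
    ∀ n : ℕ, ∀ x ∈ B, ∀ k : ℤ, x ≠ (k : ℝ) / 2 ^ n := by
  intro n
  induction n with
  | zero =>
    intro x hx k hk
    obtain ⟨h0, h1⟩ := hB hx
    rw [hk] at h0 h1
    simp only [pow_zero, div_one] at h0 h1
    have h0' : (0 : ℤ) < k := by exact_mod_cast h0
    have h1' : k < 1 := by exact_mod_cast h1
    omega
  | succ n ih =>
    intro x hx k hk
    have hθ : theta x ∈ B := by
      have := Set.mem_image_of_mem theta hx
      rwa [← hinv] at this
    by_cases h : x < 1/2
    · refine ih (theta x) hθ k ?_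
      simp only [theta, if_pos h]
      rw [hk, pow_succ]
      field_simp
    · refine ih (theta x) hθ (k - 2 ^ n) ?_
      simp only [theta, if_neg h]
      rw [hk, pow_succ]
      push_cast
      field_simp

/-- For a nonempty, closed, `θ`-invariant `B ⊂ (0,1)`, none of `B`,
`closure(B_e^c)`, `closure(B_b)` contains a binary rational `k/2^n`. -/
theorem no_binary_rationals (B : Set ℝ) (hne : B.Nonempty)
    (hB : B ⊆ Set.Ioo 0 1) (hcl : IsClosed B) (hinv : B = theta '' B) :
    ∀ x ∈ B ∪ closure (BeI B) ∪ closure (BbI B),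
      ¬ ∃ (k : ℤ) (n : ℕ), x = (k : ℝ) / 2 ^ n := by
  intro x hx hex
  obtain ⟨k, n, hkn⟩ := hex
  set C : Set ℝ := (fun x : ℝ => 2 * x) ⁻¹' B ∪ (fun x : ℝ => 2 * x - 1) ⁻¹' B with hCdef
  have hCclosed : IsClosed C :=
    (hcl.preimage (continuous_const.mul continuous_id)).union (hcl.preimage ((continuous_const.mul continuous_id).sub continuous_const))
  have hBe : BeI B ⊆ C := by
    rintro y ⟨⟨ξ, hξ, hor⟩, -⟩
    rcases hor with hy | hy
    · left
      have : 2 * y = ξ := by rw [hy]; ring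
      simpa [Set.mem_preimage, this] using hξ
    · right
      have : 2 * y - 1 = ξ := by rw [hy]; ring
      simpa [Set.mem_preimage, this] using hξ
  have hBb : BbI B ⊆ C := by
    rintro y ⟨z, ⟨⟨ξ, hξ, hor⟩, -⟩, rfl⟩
    obtain ⟨hξ0, hξ1⟩ := hB hξ
    rcases hor with hz | hz
    · have hle : z ≤ 1/2 := by rw [hz]; linarith
      right
      have hs : starR z = z + 1/2 := by simp only [starR, if_pos hle]
      have : 2 * starR z - 1 = ξ := by rw [hs, hz]; ring
      simpa [Set.mem_preimage, this] using hξ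
    · have hle : ¬ z ≤ 1/2 := by rw [hz]; push_neg; linarith
      left
      have hs : starR z = z - 1/2 := by simp only [starR, if_neg hle]
      have : 2 * starR z = ξ := by rw [hs, hz]; ring
      simpa [Set.mem_preimage, this] using hξ
  have hC : x ∈ B ∨ x ∈ C := by
    rcases hx with (hx | hx) | hx
    · exact Or.inl hx
    · exact Or.inr (closure_minimal hBe hCclosed hx)
    · exact Or.inr (closure_minimal hBb hCclosed hx)
  rcases hC with h | h | h
  · exact B_no_bin B hB hinv n x h k hkn
  · refine B_no_bin B hB hinv n (2 * x) h (2 * k) ?_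
    rw [hkn]; push_cast; ring
  · refine B_no_bin B hB hinv n (2 * x - 1) h (2 * k - 2 ^ n) ?_
    rw [hkn]; push_cast; field_simp
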